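/- (Conservation of mass, non-divergence-form model) Let d ≥ 1 and p > 0, and let u be a uniformly compactly supported smooth solution of the defocusing non-divergence-form OU-NLS with exponent p. Then the Gaussian-weighted mass M(t) = ∫_{ℝ^d×ℝ} |u(t,x,α)|²·e^{−α²/2} dx dα satisfies M(t) = M(0) for all t ∈ ℝ. -/

import Mathlib

open MeasureTheory

noncomputable section

/-- Partial derivative in the time variable. -/
def pdT {d : ℕ} (u : ℝ → (Fin d → ℝ) → ℝ → ℂ) : ℝ → (Fin d → ℝ) → ℝ → ℂ :=
  fun t x α => deriv (fun s => u s x α) t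

/-- Partial derivative in the `j`-th Euclidean variable. -/
def pdX {d : ℕ} (j : Fin d) (u : ℝ → (Fin d → ℝ) → ℝ → ℂ) : ℝ → (Fin d → ℝ) → ℝ → ℂ :=
  fun t x α => deriv (fun s => u t (Function.update x j s) α) (x j)

/-- Partial derivative in the Ornstein–Uhlenbeck variable `α`. -/
def pdA {d : ℕ} (u : ℝ → (Fin d → ℝ) → ℝ → ℂ) : ℝ → (Fin d → ℝ) → ℝ → ℂ :=
  fun t x α => deriv (fun s => u t x s) α

/-- Laplacian in the Euclidean variables: `Δ_x u = ∑_j ∂²u/∂x_j²`. -/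
def lapX {d : ℕ} (u : ℝ → (Fin d → ℝ) → ℝ → ℂ) : ℝ → (Fin d → ℝ) → ℝ → ℂ :=
  fun t x α => ∑ j : Fin d, pdX j (pdX j u) t x α

/-- A uniformly compactly supported smooth solution of the defocusing non-divergence-form
OU-NLS with exponent `p`:
`i ∂_t u + Δ_x u + ∂²u/∂α² - α ∂u/∂α = e^{-pα²/2} |u|^p u`. -/
def IsUCSSolutionNonDiv (d : ℕ) (p : ℝ) (u : ℝ → (Fin d → ℝ) → ℝ → ℂ) : Prop :=
  ContDiff ℝ (⊤ : ℕ∞) (fun q : ℝ × (Fin d → ℝ) × ℝ => u q.1 q.2.1 q.2.2) ∧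
  (∃ K : Set ((Fin d → ℝ) × ℝ), IsCompact K ∧
    ∀ (t : ℝ) (x : Fin d → ℝ) (α : ℝ), (x, α) ∉ K → u t x α = 0) ∧
  ∀ (t : ℝ) (x : Fin d → ℝ) (α : ℝ),
    Complex.I * pdT u t x α + lapX u t x α + pdA (pdA u) t x α - (α : ℂ) * pdA u t x α
      = (Real.exp (-p * α ^ 2 / 2) : ℂ) * ((‖u t x α‖ ^ p : ℝ) : ℂ) * u t x α

end

noncomputable section Aux

/-- The joint function associated to `u`. -/
def Ju {d : ℕ} (u : ℝ → (Fin d → ℝ) → ℝ → ℂ) : ℝ × (Fin d → ℝ) × ℝ → ℂ :=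
  fun q => u q.1 q.2.1 q.2.2

variable {d : ℕ} {u v : ℝ → (Fin d → ℝ) → ℝ → ℂ}

lemma one_le_inftyS : (1 : WithTop ℕ∞) ≤ ((⊤ : ℕ∞) : WithTop ℕ∞) := by
  exact_mod_cast le_top

lemma add_one_le_inftyS : ((⊤ : ℕ∞) : WithTop ℕ∞) + 1 ≤ ((⊤ : ℕ∞) : WithTop ℕ∞) := by
  exact_mod_cast le_top

lemma hasDerivAt_update' (x : Fin d → ℝ) (j : Fin d) (s : ℝ) :
    HasDerivAt (fun s => Function.update x j s) (Pi.single j 1) s := by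
  rw [hasDerivAt_pi]
  intro i
  rcases eq_or_ne i j with rfl | h
  · simp only [Function.update_self, Pi.single_eq_same]
    exact hasDerivAt_id' s
  · simpa [Function.update_apply, h, Pi.single_apply] using hasDerivAt_const s (x i)

lemma hasDerivAt_sliceT (hv : ContDiff ℝ (⊤ : ℕ∞) (Ju v)) (t : ℝ) (x : Fin d → ℝ) (α : ℝ) :
    HasDerivAt (fun s => v s x α) (pdT v t x α) t := by
  have hγ : HasDerivAt (fun s : ℝ => ((s, x, α) : ℝ × (Fin d → ℝ) × ℝ)) (1, 0, 0) t :=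
    (hasDerivAt_id t).prodMk ((hasDerivAt_const t x).prodMk (hasDerivAt_const t α))
  have h := ((hv.differentiable (by simp) (t, x, α)).hasFDerivAt).comp_hasDerivAt t hγ
  exact h.differentiableAt.hasDerivAt

lemma hasDerivAt_sliceX (hv : ContDiff ℝ (⊤ : ℕ∞) (Ju v)) (j : Fin d) (t : ℝ)
    (x : Fin d → ℝ) (α : ℝ) :
    HasDerivAt (fun s => v t (Function.update x j s) α) (pdX j v t x α) (x j) := by
  have hγ : HasDerivAt (fun s : ℝ => ((t, Function.update x j s, α) : ℝ × (Fin d → ℝ) × ℝ))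
      (0, Pi.single j 1, 0) (x j) :=
    (hasDerivAt_const _ t).prodMk ((hasDerivAt_update' x j (x j)).prodMk (hasDerivAt_const _ α))
  have h := ((hv.differentiable (by simp)
      (t, Function.update x j (x j), α)).hasFDerivAt).comp_hasDerivAt (x j) hγ
  exact h.differentiableAt.hasDerivAt

lemma hasDerivAt_sliceA (hv : ContDiff ℝ (⊤ : ℕ∞) (Ju v)) (t : ℝ) (x : Fin d → ℝ) (α : ℝ) :
    HasDerivAt (fun s => v t x s) (pdA v t x α) α := by
  have hγ : HasDerivAt (fun s : ℝ => ((t, x, s) : ℝ × (Fin d → ℝ) × ℝ)) (0, 0, 1) α :=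
    (hasDerivAt_const _ t).prodMk ((hasDerivAt_const _ x).prodMk (hasDerivAt_id α))
  have h := ((hv.differentiable (by simp) (t, x, α)).hasFDerivAt).comp_hasDerivAt α hγ
  exact h.differentiableAt.hasDerivAt

lemma contDiff_Ju_pdT (hv : ContDiff ℝ (⊤ : ℕ∞) (Ju v)) :
    ContDiff ℝ (⊤ : ℕ∞) (Ju (pdT v)) := by
  have hrep : Ju (pdT v) = fun q => fderiv ℝ (Ju v) q (1, 0, 0) := by
    funext q
    have hγ : HasDerivAt (fun s : ℝ => ((s, q.2.1, q.2.2) : ℝ × (Fin d → ℝ) × ℝ)) (1, 0, 0) q.1 :=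
      (hasDerivAt_id q.1).prodMk ((hasDerivAt_const _ q.2.1).prodMk (hasDerivAt_const _ q.2.2))
    have h := ((hv.differentiable (by simp) (q.1, q.2.1, q.2.2)).hasFDerivAt).comp_hasDerivAt
      q.1 hγ
    exact h.deriv
  rw [hrep]
  exact (hv.fderiv_right add_one_le_inftyS).clm_apply contDiff_const

lemma contDiff_Ju_pdX (hv : ContDiff ℝ (⊤ : ℕ∞) (Ju v)) (j : Fin d) :
    ContDiff ℝ (⊤ : ℕ∞) (Ju (pdX j v)) := by
  have hrep : Ju (pdX j v) = fun q => fderiv ℝ (Ju v) q (0, Pi.single j 1, 0) := by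
    funext q
    have hγ : HasDerivAt
        (fun s : ℝ => ((q.1, Function.update q.2.1 j s, q.2.2) : ℝ × (Fin d → ℝ) × ℝ))
        (0, Pi.single j 1, 0) (q.2.1 j) :=
      (hasDerivAt_const _ q.1).prodMk
        ((hasDerivAt_update' q.2.1 j (q.2.1 j)).prodMk (hasDerivAt_const _ q.2.2))
    have h := ((hv.differentiable (by simp)
        (q.1, Function.update q.2.1 j (q.2.1 j), q.2.2)).hasFDerivAt).comp_hasDerivAt (q.2.1 j) hγ
    rw [Function.update_eq_self] at h
    exact h.deriv
  rw [hrep]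
  exact (hv.fderiv_right add_one_le_inftyS).clm_apply contDiff_const

lemma contDiff_Ju_pdA (hv : ContDiff ℝ (⊤ : ℕ∞) (Ju v)) :
    ContDiff ℝ (⊤ : ℕ∞) (Ju (pdA v)) := by
  have hrep : Ju (pdA v) = fun q => fderiv ℝ (Ju v) q (0, 0, 1) := by
    funext q
    have hγ : HasDerivAt (fun s : ℝ => ((q.1, q.2.1, s) : ℝ × (Fin d → ℝ) × ℝ)) (0, 0, 1) q.2.2 :=
      (hasDerivAt_const _ q.1).prodMk ((hasDerivAt_const _ q.2.1).prodMk (hasDerivAt_id q.2.2))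
    have h := ((hv.differentiable (by simp) (q.1, q.2.1, q.2.2)).hasFDerivAt).comp_hasDerivAt
      q.2.2 hγ
    exact h.deriv
  rw [hrep]
  exact (hv.fderiv_right add_one_le_inftyS).clm_apply contDiff_const

/-- Continuity, in the space variables, of `v t` for fixed `t`. -/
lemma continuous_fix (hv : ContDiff ℝ (⊤ : ℕ∞) (Ju v)) (t : ℝ) :
    Continuous fun q : (Fin d → ℝ) × ℝ => v t q.1 q.2 :=
  hv.continuous.comp (continuous_const.prodMk continuous_id)

end Aux
section IBP

instance haarProdPi (d : ℕ) : (volume : Measure ((Fin d → ℝ) × ℝ)).IsAddHaarMeasure := by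
  rw [Measure.volume_eq_prod]; infer_instance

/-- Integral of a line derivative of an integrable function with integrable derivative is zero. -/
lemma integral_hasLineDerivAt_eq_zero {E : Type*} [NormedAddCommGroup E] [NormedSpace ℝ E]
    [MeasurableSpace E] [BorelSpace E] [FiniteDimensional ℝ E] (μ : Measure E)
    [μ.IsAddHaarMeasure] (F F' : E → ℝ) (v : E)
    (h : ∀ x, HasLineDerivAt ℝ F (F' x) x v)
    (hF : Integrable F μ) (hF' : Integrable F' μ) :
    ∫ x, F' x ∂μ = 0 := by
  have hone : ∀ x : E, HasLineDerivAt ℝ (fun _ : E => (1 : ℝ)) ((fun _ : E => (0:ℝ)) x) x v :=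
    fun x => hasDerivAt_const 0 1
  have := integral_bilinear_hasLineDerivAt_right_eq_neg_left_of_integrable
    (μ := μ) (B := ContinuousLinearMap.mul ℝ ℝ) (f := fun _ => (1 : ℝ))
    (f' := fun _ => (0 : ℝ)) (g := F) (g' := F') (v := v)
    (by simp) (by simpa using hF') (by simpa using hF) (fun x _ => hone x) (fun x _ => h x)
  simpa using this

/-- key algebraic consequence of the equation -/
lemma alg_key (z T A : ℂ) (r : ℝ) (h : Complex.I * T + A = (r : ℂ) * z) :
    ((starRingEnd ℂ) z * T).re = -((starRingEnd ℂ) z * A).im := by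
  have h1 := congrArg Complex.re h
  have h2 := congrArg Complex.im h
  simp only [Complex.add_re, Complex.add_im, Complex.mul_re, Complex.mul_im, Complex.I_re,
    Complex.I_im, Complex.ofReal_re, Complex.ofReal_im, Complex.conj_re, Complex.conj_im,
    zero_mul, one_mul, zero_sub, zero_add, mul_zero, sub_zero] at h1 h2 ⊢
  linear_combination z.re * h2 - z.im * h1

lemma im_conj_mul_self (z : ℂ) : ((starRingEnd ℂ) z * z).im = 0 := by
  simp [Complex.mul_im]; ring

lemma re_conj_mul_comm (a b : ℂ) : ((starRingEnd ℂ) a * b).re = ((starRingEnd ℂ) b * a).re := by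
  simp [Complex.mul_re]; ring

end IBP
noncomputable section

variable {d : ℕ}

lemma hasDerivAt_negsq (α : ℝ) :
    HasDerivAt (fun s : ℝ => Real.exp (-s ^ 2 / 2)) (-α * Real.exp (-α ^ 2 / 2)) α := by
  have hin : HasDerivAt (fun s' : ℝ => -s' ^ 2 / 2) (-α) α := by
    have h := ((hasDerivAt_pow 2 α).neg.div_const 2)
    refine h.congr_deriv ?_
    push_cast; ring
  have h2 := (Real.hasDerivAt_exp (-α ^ 2 / 2)).comp α hin
  refine h2.congr_deriv ?_
  ring

lemma add_smul_single (x : Fin d → ℝ) (j : Fin d) (s : ℝ) :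
    x + s • (Pi.single j 1 : Fin d → ℝ) = Function.update x j (x j + s) := by
  funext i
  rcases eq_or_ne i j with rfl | h
  · simp
  · simp [Function.update_apply, h, Pi.single_apply]

lemma prod_line_pt (x : Fin d → ℝ) (α : ℝ) (j : Fin d) (s : ℝ) :
    ((x, α) : (Fin d → ℝ) × ℝ) + s • ((Pi.single j 1 : Fin d → ℝ), (0 : ℝ))
      = (Function.update x j (x j + s), α) := by
  ext
  · rw [Prod.fst_add]; exact congrFun (add_smul_single x j s) _
  · simp

lemma prod_line_ptA (x : Fin d → ℝ) (α : ℝ) (s : ℝ) :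
    ((x, α) : (Fin d → ℝ) × ℝ) + s • ((0 : Fin d → ℝ), (1 : ℝ)) = (x, α + s) := by
  ext <;> simp

end

noncomputable section Calc

variable {d : ℕ} {u : ℝ → (Fin d → ℝ) → ℝ → ℂ}

/-- conjugated slice derivative helper -/
lemma hasDerivAt_conj {f : ℝ → ℂ} {f' : ℂ} {s : ℝ} (h : HasDerivAt f f' s) :
    HasDerivAt (fun r => (starRingEnd ℂ) (f r)) ((starRingEnd ℂ) f') s := by
  simpa only [RCLike.star_def] using h.star

/-- time derivative of the mass density -/
lemma hasDerivAt_mass (hu : ContDiff ℝ (⊤ : ℕ∞) (Ju u)) (s : ℝ) (x : Fin d → ℝ) (α : ℝ) :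
    HasDerivAt (fun r => ‖u r x α‖ ^ 2 * Real.exp (-α ^ 2 / 2))
      ((2 * ((starRingEnd ℂ) (u s x α) * pdT u s x α).re) * Real.exp (-α ^ 2 / 2)) s := by
  have h1 := hasDerivAt_sliceT hu s x α
  have hmul := (hasDerivAt_conj h1).mul h1
  have hre := (Complex.reCLM.hasFDerivAt.comp_hasDerivAt s hmul).mul_const (Real.exp (-α ^ 2 / 2))
  have hre' : HasDerivAt
      (fun r => ((starRingEnd ℂ) (u r x α) * u r x α).re * Real.exp (-α ^ 2 / 2))
      ((2 * ((starRingEnd ℂ) (u s x α) * pdT u s x α).re) * Real.exp (-α ^ 2 / 2)) s := by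
    refine hre.congr_deriv ?_
    simp only [Complex.reCLM_apply, Complex.add_re]
    rw [re_conj_mul_comm (pdT u s x α) (u s x α)]
    ring
  refine hre'.congr_of_eventuallyEq (Filter.Eventually.of_forall fun r => ?_)
  show ‖u r x α‖ ^ 2 * Real.exp (-α ^ 2 / 2) = ((starRingEnd ℂ) (u r x α) * u r x α).re * Real.exp (-α ^ 2 / 2)
  rw [Complex.sq_norm, mul_comm ((starRingEnd ℂ) (u r x α)), Complex.mul_conj, Complex.ofReal_re]

/-- line derivative of the `j`-momentum density in direction `j`. -/
lemma hasLineDerivAt_PsiX (hu : ContDiff ℝ (⊤ : ℕ∞) (Ju u)) (j : Fin d) (t : ℝ)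
    (x : Fin d → ℝ) (α : ℝ) :
    HasLineDerivAt ℝ
      (fun q : (Fin d → ℝ) × ℝ =>
        -2 * ((starRingEnd ℂ) (u t q.1 q.2) * pdX j u t q.1 q.2).im * Real.exp (-q.2 ^ 2 / 2))
      (-2 * ((starRingEnd ℂ) (u t x α) * pdX j (pdX j u) t x α).im * Real.exp (-α ^ 2 / 2))
      (x, α) ((Pi.single j 1 : Fin d → ℝ), (0 : ℝ)) := by
  have h1 := hasDerivAt_sliceX hu j t x α
  have h2 := hasDerivAt_sliceX (contDiff_Ju_pdX hu j) j t x α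
  have hmul := (hasDerivAt_conj h1).mul h2
  have him := (Complex.imCLM.hasFDerivAt.comp_hasDerivAt (x j) hmul).const_mul (-2)
  have hg := him.mul_const (Real.exp (-α ^ 2 / 2))
  have haff : HasDerivAt (fun s : ℝ => x j + s) 1 0 := by
    exact (hasDerivAt_id' (0:ℝ)).const_add (x j)
  have hg0 : HasDerivAt
      (fun y => -2 * ((starRingEnd ℂ) (u t (Function.update x j y) α)
        * pdX j u t (Function.update x j y) α).im * Real.exp (-α ^ 2 / 2))
      (-2 * ((starRingEnd ℂ) (u t x α) * pdX j (pdX j u) t x α).im * Real.exp (-α ^ 2 / 2))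
      (x j + (0:ℝ)) := by
    rw [add_zero]
    refine hg.congr_deriv ?_
    simp only [Function.comp_apply, Complex.imCLM_apply, Complex.add_im, im_conj_mul_self,
      zero_add, Function.update_eq_self]
  have hcomp := hg0.comp (0:ℝ) haff
  rw [mul_one] at hcomp
  refine hcomp.congr_of_eventuallyEq (Filter.Eventually.of_forall fun s => ?_)
  simp only [Function.comp_apply, prod_line_pt]

/-- line derivative of the weighted `α`-momentum density in direction `α`. -/
lemma hasLineDerivAt_PsiA (hu : ContDiff ℝ (⊤ : ℕ∞) (Ju u)) (t : ℝ)
    (x : Fin d → ℝ) (α : ℝ) :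
    HasLineDerivAt ℝ
      (fun q : (Fin d → ℝ) × ℝ =>
        -2 * ((starRingEnd ℂ) (u t q.1 q.2) * pdA u t q.1 q.2).im * Real.exp (-q.2 ^ 2 / 2))
      (-2 * ((starRingEnd ℂ) (u t x α)
          * (pdA (pdA u) t x α - (α : ℂ) * pdA u t x α)).im * Real.exp (-α ^ 2 / 2))
      (x, α) ((0 : Fin d → ℝ), (1 : ℝ)) := by
  have h1 := hasDerivAt_sliceA hu t x α
  have h2 := hasDerivAt_sliceA (contDiff_Ju_pdA hu) t x α
  have hmul := (hasDerivAt_conj h1).mul h2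
  have him := (Complex.imCLM.hasFDerivAt.comp_hasDerivAt α hmul).const_mul (-2)
  have hg := him.mul (hasDerivAt_negsq α)
  have haff : HasDerivAt (fun s : ℝ => α + s) 1 0 := by
    exact (hasDerivAt_id' (0:ℝ)).const_add α
  have hg0 : HasDerivAt
      (fun y => -2 * ((starRingEnd ℂ) (u t x y) * pdA u t x y).im * Real.exp (-y ^ 2 / 2))
      (-2 * ((starRingEnd ℂ) (u t x α)
          * (pdA (pdA u) t x α - (α : ℂ) * pdA u t x α)).im * Real.exp (-α ^ 2 / 2))
      (α + (0:ℝ)) := by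
    rw [add_zero]
    refine hg.congr_deriv ?_
    have hα : ((starRingEnd ℂ) (u t x α) * ((α : ℂ) * pdA u t x α)).im
        = α * ((starRingEnd ℂ) (u t x α) * pdA u t x α).im := by
      rw [mul_left_comm]
      simp [Complex.mul_im]
    simp only [Function.comp_apply, Complex.imCLM_apply, mul_sub, Complex.sub_im,
      Complex.add_im, im_conj_mul_self, zero_add, hα, Pi.mul_apply]
    ring
  have hcomp := hg0.comp (0:ℝ) haff
  rw [mul_one] at hcomp
  refine hcomp.congr_of_eventuallyEq (Filter.Eventually.of_forall fun s => ?_)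
  simp only [Function.comp_apply, prod_line_ptA]

end Calc

noncomputable section Main

variable {d : ℕ} {p : ℝ} {u : ℝ → (Fin d → ℝ) → ℝ → ℂ}

lemma integral_Fprime_zero (hu : IsUCSSolutionNonDiv d p u) (s : ℝ) :
    ∫ q : (Fin d → ℝ) × ℝ,
      (2 * ((starRingEnd ℂ) (u s q.1 q.2) * pdT u s q.1 q.2).re) * Real.exp (-q.2 ^ 2 / 2)
      = 0 := by
  obtain ⟨hsm', ⟨K, hK, hKsupp⟩, heq⟩ := hu
  have hsm : ContDiff ℝ (⊤ : ℕ∞) (Ju u) := hsm'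
  have hint : ∀ f : (Fin d → ℝ) × ℝ → ℝ, Continuous f → (∀ q, q ∉ K → f q = 0) →
      Integrable f := fun f hc hs =>
    hc.integrable_of_hasCompactSupport (HasCompactSupport.intro hK hs)
  have hexpc : Continuous fun q : (Fin d → ℝ) × ℝ => Real.exp (-q.2 ^ 2 / 2) :=
    Real.continuous_exp.comp (((continuous_snd.pow 2).neg).div_const 2)
  -- the pieces
  set fj : Fin d → (Fin d → ℝ) × ℝ → ℝ := fun j q =>
    -2 * ((starRingEnd ℂ) (u s q.1 q.2) * pdX j (pdX j u) s q.1 q.2).im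
      * Real.exp (-q.2 ^ 2 / 2) with hfj_def
  set g : (Fin d → ℝ) × ℝ → ℝ := fun q =>
    -2 * ((starRingEnd ℂ) (u s q.1 q.2)
      * (pdA (pdA u) s q.1 q.2 - (q.2 : ℂ) * pdA u s q.1 q.2)).im
      * Real.exp (-q.2 ^ 2 / 2) with hg_def
  -- pointwise identity from the PDE
  have hpt : ∀ q : (Fin d → ℝ) × ℝ,
      (2 * ((starRingEnd ℂ) (u s q.1 q.2) * pdT u s q.1 q.2).re) * Real.exp (-q.2 ^ 2 / 2)
        = (∑ j, fj j q) + g q := by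
    rintro ⟨x, α⟩
    simp only [hfj_def, hg_def]
    have heq' : Complex.I * pdT u s x α
        + (lapX u s x α + pdA (pdA u) s x α - (α : ℂ) * pdA u s x α)
        = ((Real.exp (-p * α ^ 2 / 2) * (‖u s x α‖ ^ p) : ℝ) : ℂ) * u s x α := by
      rw [Complex.ofReal_mul]
      linear_combination heq s x α
    have halg := alg_key _ _ _ _ heq'
    have hlap : lapX u s x α = ∑ j, pdX j (pdX j u) s x α := rfl
    have hL : (starRingEnd ℂ) (u s x α)
        * (lapX u s x α + pdA (pdA u) s x α - (α : ℂ) * pdA u s x α)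
        = (∑ j, (starRingEnd ℂ) (u s x α) * pdX j (pdX j u) s x α)
          + (starRingEnd ℂ) (u s x α) * (pdA (pdA u) s x α - (α : ℂ) * pdA u s x α) := by
      rw [add_sub_assoc, mul_add, hlap, Finset.mul_sum]
    have hsum : (∑ j : Fin d, -2 * ((starRingEnd ℂ) (u s x α) * pdX j (pdX j u) s x α).im
          * Real.exp (-α ^ 2 / 2))
        = -2 * (∑ j : Fin d, ((starRingEnd ℂ) (u s x α) * pdX j (pdX j u) s x α).im)
          * Real.exp (-α ^ 2 / 2) := by
      rw [← Finset.sum_mul, ← Finset.mul_sum]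
    rw [halg, hL, Complex.add_im, Complex.im_sum, hsum]
    ring
  -- continuity of the pieces
  have hcu : Continuous fun q : (Fin d → ℝ) × ℝ => u s q.1 q.2 := continuous_fix hsm s
  have hcconj : Continuous fun q : (Fin d → ℝ) × ℝ => (starRingEnd ℂ) (u s q.1 q.2) :=
    Complex.continuous_conj.comp hcu
  have hfjc : ∀ j, Continuous (fj j) := by
    intro j
    have h2 : Continuous fun q : (Fin d → ℝ) × ℝ => pdX j (pdX j u) s q.1 q.2 :=
      continuous_fix (contDiff_Ju_pdX (contDiff_Ju_pdX hsm j) j) s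
    exact ((continuous_const.mul (Complex.continuous_im.comp (hcconj.mul h2)))).mul hexpc
  have hgc : Continuous g := by
    have h2 : Continuous fun q : (Fin d → ℝ) × ℝ => pdA (pdA u) s q.1 q.2 :=
      continuous_fix (contDiff_Ju_pdA (contDiff_Ju_pdA hsm)) s
    have h3 : Continuous fun q : (Fin d → ℝ) × ℝ => pdA u s q.1 q.2 :=
      continuous_fix (contDiff_Ju_pdA hsm) s
    have h4 : Continuous fun q : (Fin d → ℝ) × ℝ => (q.2 : ℂ) :=
      Complex.continuous_ofReal.comp continuous_snd
    exact (continuous_const.mul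
      (Complex.continuous_im.comp (hcconj.mul (h2.sub (h4.mul h3))))).mul hexpc
  -- support of the pieces
  have hfjs : ∀ j, ∀ q, q ∉ K → fj j q = 0 := by
    intro j q hq
    have h0 : u s q.1 q.2 = 0 := hKsupp s q.1 q.2 hq
    simp [hfj_def, h0]
  have hgs : ∀ q, q ∉ K → g q = 0 := by
    intro q hq
    have h0 : u s q.1 q.2 = 0 := hKsupp s q.1 q.2 hq
    simp [hg_def, h0]
  have hfji : ∀ j, Integrable (fj j) := fun j => hint _ (hfjc j) (hfjs j)
  have hgi : Integrable g := hint _ hgc hgs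
  -- Ψ functions and their integrability
  have hPsiXi : ∀ j : Fin d, Integrable (fun q : (Fin d → ℝ) × ℝ =>
      -2 * ((starRingEnd ℂ) (u s q.1 q.2) * pdX j u s q.1 q.2).im
        * Real.exp (-q.2 ^ 2 / 2)) := by
    intro j
    refine hint _ ?_ ?_
    · exact (continuous_const.mul (Complex.continuous_im.comp
        (hcconj.mul (continuous_fix (contDiff_Ju_pdX hsm j) s)))).mul hexpc
    · intro q hq
      have h0 : u s q.1 q.2 = 0 := hKsupp s q.1 q.2 hq
      simp [h0]
  have hPsiAi : Integrable (fun q : (Fin d → ℝ) × ℝ =>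
      -2 * ((starRingEnd ℂ) (u s q.1 q.2) * pdA u s q.1 q.2).im
        * Real.exp (-q.2 ^ 2 / 2)) := by
    refine hint _ ?_ ?_
    · exact (continuous_const.mul (Complex.continuous_im.comp
        (hcconj.mul (continuous_fix (contDiff_Ju_pdA hsm) s)))).mul hexpc
    · intro q hq
      have h0 : u s q.1 q.2 = 0 := hKsupp s q.1 q.2 hq
      simp [h0]
  -- each piece integrates to zero
  have hfjz : ∀ j : Fin d, ∫ q : (Fin d → ℝ) × ℝ, fj j q = 0 := by
    intro j
    refine integral_hasLineDerivAt_eq_zero volume _ (fj j)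
      ((Pi.single j 1 : Fin d → ℝ), (0 : ℝ)) ?_ (hPsiXi j) (hfji j)
    rintro ⟨x, α⟩
    exact hasLineDerivAt_PsiX hsm j s x α
  have hgz : ∫ q : (Fin d → ℝ) × ℝ, g q = 0 := by
    refine integral_hasLineDerivAt_eq_zero volume _ g
      ((0 : Fin d → ℝ), (1 : ℝ)) ?_ hPsiAi hgi
    rintro ⟨x, α⟩
    exact hasLineDerivAt_PsiA hsm s x α
  calc ∫ q : (Fin d → ℝ) × ℝ,
        (2 * ((starRingEnd ℂ) (u s q.1 q.2) * pdT u s q.1 q.2).re) * Real.exp (-q.2 ^ 2 / 2)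
      = ∫ q : (Fin d → ℝ) × ℝ, ((∑ j, fj j q) + g q) := by
        exact integral_congr_ae (Filter.Eventually.of_forall hpt)
    _ = (∑ j, ∫ q : (Fin d → ℝ) × ℝ, fj j q) + ∫ q : (Fin d → ℝ) × ℝ, g q := by
        rw [integral_add (integrable_finset_sum _ fun j _ => hfji j) hgi,
          integral_finset_sum _ fun j _ => hfji j]
    _ = 0 := by simp [hfjz, hgz]

end Main

noncomputable section Main2

variable {d : ℕ} {p : ℝ} {u : ℝ → (Fin d → ℝ) → ℝ → ℂ}

lemma hasDerivAt_M (hu : IsUCSSolutionNonDiv d p u) (t₀ : ℝ) :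
    HasDerivAt (fun r => ∫ q : (Fin d → ℝ) × ℝ,
        ‖u r q.1 q.2‖ ^ 2 * Real.exp (-q.2 ^ 2 / 2))
      (∫ q : (Fin d → ℝ) × ℝ,
        (2 * ((starRingEnd ℂ) (u t₀ q.1 q.2) * pdT u t₀ q.1 q.2).re)
          * Real.exp (-q.2 ^ 2 / 2)) t₀ := by
  obtain ⟨hsm', ⟨K, hK, hKsupp⟩, heq⟩ := hu
  have hsm : ContDiff ℝ (⊤ : ℕ∞) (Ju u) := hsm'
  have hexpc : Continuous fun q : (Fin d → ℝ) × ℝ => Real.exp (-q.2 ^ 2 / 2) :=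
    Real.continuous_exp.comp (((continuous_snd.pow 2).neg).div_const 2)
  -- joint continuity of the putative derivative
  have hcF' : Continuous (fun z : ℝ × (Fin d → ℝ) × ℝ =>
      (2 * ((starRingEnd ℂ) (Ju u z) * Ju (pdT u) z).re) * Real.exp (-z.2.2 ^ 2 / 2)) := by
    have h1 : Continuous (Ju u) := hsm.continuous
    have h2 : Continuous (Ju (pdT u)) := (contDiff_Ju_pdT hsm).continuous
    exact (continuous_const.mul (Complex.continuous_re.comp
      ((Complex.continuous_conj.comp h1).mul h2))).mul
      (Real.continuous_exp.comp ((((continuous_snd.comp continuous_snd).pow 2).neg).div_const 2))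
  obtain ⟨C, hC⟩ := ((isCompact_Icc (a := t₀ - 1) (b := t₀ + 1)).prod hK).exists_bound_of_continuousOn
    hcF'.continuousOn
  have key := hasDerivAt_integral_of_dominated_loc_of_deriv_le (μ := (volume : Measure ((Fin d → ℝ) × ℝ))) (s := Metric.ball t₀ 1) (x₀ := t₀)
    (F := fun r (q : (Fin d → ℝ) × ℝ) => ‖u r q.1 q.2‖ ^ 2 * Real.exp (-q.2 ^ 2 / 2))
    (F' := fun r (q : (Fin d → ℝ) × ℝ) =>
      (2 * ((starRingEnd ℂ) (u r q.1 q.2) * pdT u r q.1 q.2).re) * Real.exp (-q.2 ^ 2 / 2))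
    (bound := K.indicator fun _ => C) (Metric.ball_mem_nhds t₀ one_pos) ?_ ?_ ?_ ?_ ?_ ?_
  · exact key.2
  · refine Filter.Eventually.of_forall fun r => ?_
    exact (((continuous_norm.comp (continuous_fix hsm r)).pow 2).mul
      hexpc).aestronglyMeasurable
  · refine (((continuous_norm.comp (continuous_fix hsm t₀)).pow 2).mul
        hexpc).integrable_of_hasCompactSupport (HasCompactSupport.intro hK ?_)
    intro q hq
    have h0 : u t₀ q.1 q.2 = 0 := hKsupp t₀ q.1 q.2 hq
    simp [h0]
  · exact ((continuous_const.mul (Complex.continuous_re.comp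
      ((Complex.continuous_conj.comp (continuous_fix hsm t₀)).mul
        (continuous_fix (contDiff_Ju_pdT hsm) t₀)))).mul hexpc).aestronglyMeasurable
  · refine Filter.Eventually.of_forall fun q => fun r hr => ?_
    by_cases hq : q ∈ K
    · rw [Set.indicator_of_mem hq]
      refine hC (r, q) ?_
      refine Set.mem_prod.2 ⟨?_, hq⟩
      have := Metric.mem_ball.1 hr
      rw [Real.dist_eq] at this
      constructor <;> [linarith [abs_lt.1 this]; linarith [abs_lt.1 this]]
    · rw [Set.indicator_of_notMem hq]
      have h0 : u r q.1 q.2 = 0 := hKsupp r q.1 q.2 hq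
      simp [h0]
  · rw [integrable_indicator_iff hK.isClosed.measurableSet]
    exact integrableOn_const hK.measure_lt_top.ne
  · refine Filter.Eventually.of_forall fun q => fun r hr => ?_
    exact hasDerivAt_mass hsm r q.1 q.2

end Main2

/-- Conservation of the Gaussian-weighted mass for the non-divergence-form model. -/
theorem stmt9 (d : ℕ) (hd : 1 ≤ d) (p : ℝ) (hp : 0 < p)
    (u : ℝ → (Fin d → ℝ) → ℝ → ℂ) (hu : IsUCSSolutionNonDiv d p u) (t : ℝ) :
    ∫ q : (Fin d → ℝ) × ℝ, ‖u t q.1 q.2‖ ^ 2 * Real.exp (-q.2 ^ 2 / 2)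
      = ∫ q : (Fin d → ℝ) × ℝ, ‖u 0 q.1 q.2‖ ^ 2 * Real.exp (-q.2 ^ 2 / 2) := by
  have hM : ∀ r : ℝ, HasDerivAt (fun r => ∫ q : (Fin d → ℝ) × ℝ,
      ‖u r q.1 q.2‖ ^ 2 * Real.exp (-q.2 ^ 2 / 2)) 0 r := by
    intro r
    have h := hasDerivAt_M hu r
    rwa [integral_Fprime_zero hu r] at h
  exact is_const_of_deriv_eq_zero (fun r => (hM r).differentiableAt)
    (fun r => (hM r).deriv) t 0
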